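/- For all λ₁, λ₂ > 0, c > 0 and r ≥ 0, ∫_{r/c}^{∞} ( exp(−π λ₁ r²) − exp(−π λ₁ c² s²) ) · 2 λ₂ exp(−2 λ₂ s) ds = ∫_{r}^{∞} 2π λ₁ t · exp( −π λ₁ t² − (2 λ₂ / c) t ) dt. -/

import Mathlib

open MeasureTheory Real Filter Set Topology

/-! Integrating by parts moves the derivative from `b e^{-b s}` onto `e^{-a x²} - e^{-a s²}`;
the boundary term vanishes at both ends, leaving `∫ 2 a s e^{-a s² - b s} ds`. For
`a = π λ₁ c²`, `x = r / c` and `b = 2 λ₂`, the substitution `t = c s` turns this into the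
right-hand side. -/

theorem tendsto_exp_neg_mul_of_tendsto_atTop {α : Type*} {l : Filter α} {f : α → ℝ} {a : ℝ}
    (hf : Tendsto f l atTop) (ha : 0 < a) : Tendsto (fun s => exp (-(a * f s))) l (𝓝 0) :=
  tendsto_exp_atBot.comp (tendsto_neg_atTop_atBot.comp (hf.const_mul_atTop ha))

theorem hasDerivAt_exp_neg_mul_sq (a s : ℝ) :
    HasDerivAt (fun s => exp (-(a * s ^ 2))) (-(2 * a * (s * exp (-a * s ^ 2)))) s := by
  refine ((hasDerivAt_pow 2 s).const_mul a).neg.exp.congr_deriv ?_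
  norm_num
  ring

theorem norm_exp_neg_mul_le_of_mem_Ioi {b x s : ℝ} (hb : 0 ≤ b) (hs : s ∈ Ioi x) :
    ‖exp (-(b * s))‖ ≤ exp (-(b * x)) := by
  rw [norm_of_nonneg (exp_pos _).le, exp_le_exp]
  nlinarith [mem_Ioi.1 hs]

theorem integrableOn_Ioi_bdd_mul_exp_neg_mul {f : ℝ → ℝ} {C b : ℝ}
    (hf : AEStronglyMeasurable f) (hfC : ∀ s, ‖f s‖ ≤ C) (hb : 0 < b) (x : ℝ) :
    IntegrableOn (fun s => f s * exp (-(b * s))) (Ioi x) := by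
  have hexp : IntegrableOn (fun s => exp (-(b * s))) (Ioi x) := by
    simpa only [neg_mul] using exp_neg_integrableOn_Ioi x hb
  exact hexp.bdd_mul hf.restrict (ae_of_all _ hfC)

theorem integrableOn_Ioi_mul_exp_neg_mul_sq_mul_exp_neg_mul {a b : ℝ} (ha : 0 < a) (hb : 0 ≤ b)
    (x : ℝ) : IntegrableOn (fun s => s * exp (-a * s ^ 2) * exp (-(b * s))) (Ioi x) :=
  (integrable_mul_exp_neg_mul_sq ha).integrableOn.mul_bdd (by fun_prop)
    (ae_restrict_of_forall_mem measurableSet_Ioi fun _ => norm_exp_neg_mul_le_of_mem_Ioi hb)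

theorem integral_Ioi_exp_sq_sub_mul_exp {a b : ℝ} (ha : 0 < a) (hb : 0 < b) (x : ℝ) :
    ∫ s in Ioi x, (exp (-(a * x ^ 2)) - exp (-(a * s ^ 2))) * (b * exp (-(b * s)))
      = ∫ s in Ioi x, 2 * a * s * exp (-(a * s ^ 2) - b * s) := by
  set u : ℝ → ℝ := fun s => exp (-(a * x ^ 2)) - exp (-(a * s ^ 2))
  set u' : ℝ → ℝ := fun s => 2 * a * (s * exp (-a * s ^ 2))
  set v : ℝ → ℝ := fun s => -exp (-(b * s))
  set v' : ℝ → ℝ := fun s => b * exp (-(b * s))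
  have hu : ∀ s, HasDerivAt u (u' s) s := fun s =>
    ((hasDerivAt_exp_neg_mul_sq a s).const_sub _).congr_deriv (neg_neg _)
  have hv : ∀ s, HasDerivAt v (v' s) s := fun s => by
    refine ((((hasDerivAt_id s).const_mul b).neg.exp).neg).congr_deriv ?_
    simp only [v', Pi.neg_apply, id, mul_one]
    ring
  have hu_bound : ∀ s, ‖u s‖ ≤ 1 := fun s =>
    abs_sub_le_of_nonneg_of_le (exp_pos _).le (exp_le_one_iff.2 (by nlinarith [sq_nonneg x]))
      (exp_pos _).le (exp_le_one_iff.2 (by nlinarith [sq_nonneg s]))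
  have huv' : IntegrableOn (u * v') (Ioi x) := by
    refine IntegrableOn.congr_fun
      ((integrableOn_Ioi_bdd_mul_exp_neg_mul (by fun_prop) hu_bound hb x).const_mul b)
      (fun s _ => ?_) measurableSet_Ioi
    simp only [Pi.mul_apply, v']
    ring
  have hu'v : IntegrableOn (u' * v) (Ioi x) := by
    refine IntegrableOn.congr_fun
      ((integrableOn_Ioi_mul_exp_neg_mul_sq_mul_exp_neg_mul ha hb.le x).const_mul (-(2 * a)))
      (fun s _ => ?_) measurableSet_Ioi
    simp only [Pi.mul_apply, u', v]
    ring
  have h_zero : Tendsto (u * v) (𝓝[>] x) (𝓝 0) := by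
    have := (((hu x).continuousAt.mul (hv x).continuousAt).continuousWithinAt (s := Ioi x)).tendsto
    rwa [Pi.mul_apply, show u x = 0 from sub_self _, zero_mul] at this
  have h_infty : Tendsto (u * v) atTop (𝓝 0) := by
    have := (tendsto_const_nhds (x := exp (-(a * x ^ 2))).sub
      (tendsto_exp_neg_mul_of_tendsto_atTop (tendsto_pow_atTop two_ne_zero) ha)).mul
      (tendsto_exp_neg_mul_of_tendsto_atTop tendsto_id hb).neg
    rwa [sub_zero, neg_zero, mul_zero] at this
  rw [integral_Ioi_mul_deriv_eq_deriv_mul (fun s _ => hu s) (fun s _ => hv s) huv' hu'v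
    h_zero h_infty, sub_self, zero_sub, ← integral_neg]
  refine setIntegral_congr_fun measurableSet_Ioi fun s _ => ?_
  simp only [u', v, neg_mul, sub_eq_add_neg, exp_add]
  ring

theorem integral_identity_serving_distance (lam₁ lam₂ c r : ℝ)
    (hlam₁ : 0 < lam₁) (hlam₂ : 0 < lam₂) (hc : 0 < c) :
    (∫ s in Set.Ioi (r / c),
        (Real.exp (-(π * lam₁ * r ^ 2)) - Real.exp (-(π * lam₁ * c ^ 2 * s ^ 2))) *
          (2 * lam₂ * Real.exp (-(2 * lam₂ * s))))
      = ∫ t in Set.Ioi r,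
          2 * π * lam₁ * t * Real.exp (-(π * lam₁ * t ^ 2) - (2 * lam₂ / c) * t) := by
  have hr : π * lam₁ * r ^ 2 = π * lam₁ * c ^ 2 * (r / c) ^ 2 := by field_simp
  conv_rhs => rw [← mul_div_cancel₀ r hc.ne', ← integral_comp_mul_left_Ioi' _ _ hc]
  rw [hr, integral_Ioi_exp_sq_sub_mul_exp (by positivity) (by positivity), smul_eq_mul,
    ← integral_const_mul]
  refine setIntegral_congr_fun measurableSet_Ioi fun s _ => ?_
  field_simp
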